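/- The shortest distance from the Bernstein ellipse E_ρ (ρ > 1) to the interval [-1,1] equals (ρ + ρ^{-1})/2 - 1; that is, the infimum over z ∈ E_ρ and x ∈ [-1,1] of |z - x| is (ρ+ρ^{-1})/2 - 1, and in particular min_{z ∈ E_ρ} |1+z| = (ρ+ρ^{-1})/2 - 1. -/

import Mathlib

/-!
Write `a = (ρ + ρ⁻¹)/2` and `b = (ρ - ρ⁻¹)/2`, so that the ellipse is `θ ↦ a cos θ + i b sin θ`
with `b² = a² - 1`. For `x ∈ [-1, 1]` the squared distance from this point to `x` is
`(a - 1)² + 2 (a - 1)(1 - x cos θ) + (x - cos θ)²`, which is at least `(a - 1)²`,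
with equality at `θ = π`, `x = -1`.
-/

open Complex Real

noncomputable def bernsteinPoint (ρ θ : ℝ) : ℂ :=
  ((ρ : ℂ) * exp (θ * I) + (ρ : ℂ)⁻¹ * exp (-(θ * I))) / 2

lemma bernsteinPoint_eq (ρ θ : ℝ) :
    bernsteinPoint ρ θ =
      (((ρ + ρ⁻¹) / 2 * Real.cos θ : ℝ) : ℂ) + (((ρ - ρ⁻¹) / 2 * Real.sin θ : ℝ) : ℂ) * I := by
  rw [bernsteinPoint, show -(θ * I) = ((-θ : ℝ) : ℂ) * I by push_cast; ring,
    exp_mul_I, exp_mul_I, ← ofReal_cos, ← ofReal_sin, ← ofReal_cos, ← ofReal_sin,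
    Real.cos_neg, Real.sin_neg]
  push_cast
  ring

lemma bernsteinPoint_pi (ρ : ℝ) : bernsteinPoint ρ π = ((-((ρ + ρ⁻¹) / 2) : ℝ) : ℂ) := by
  rw [bernsteinPoint_eq, Real.cos_pi, Real.sin_pi]
  push_cast
  ring

lemma one_le_add_inv_div_two {ρ : ℝ} (hρ : 0 < ρ) : 1 ≤ (ρ + ρ⁻¹) / 2 := by
  have hmul : ρ * ρ⁻¹ = 1 := mul_inv_cancel₀ hρ.ne'
  nlinarith [mul_nonneg (inv_pos.2 hρ).le (sq_nonneg (ρ - 1))]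

lemma sq_sub_one_le_ellipse_dist_sq {a b c s x : ℝ} (ha : 1 ≤ a) (hb : b ^ 2 = a ^ 2 - 1)
    (hcs : s ^ 2 + c ^ 2 = 1) (hx : x ∈ Set.Icc (-1 : ℝ) 1) :
    (a - 1) ^ 2 ≤ (a * c - x) ^ 2 + (b * s) ^ 2 := by
  have hxc : x * c ≤ 1 := by nlinarith [sq_nonneg (x - c), sq_nonneg s, hx.1, hx.2]
  have key : (a * c - x) ^ 2 + (b * s) ^ 2 =
      (a - 1) ^ 2 + 2 * (a - 1) * (1 - x * c) + (x - c) ^ 2 := by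
    rw [mul_pow, hb, show s ^ 2 = 1 - c ^ 2 by linarith]
    ring
  rw [key]
  nlinarith [sq_nonneg (x - c)]

lemma add_inv_div_two_sub_one_le_norm_bernsteinPoint_sub {ρ x : ℝ} (hρ : 0 < ρ) (θ : ℝ)
    (hx : x ∈ Set.Icc (-1 : ℝ) 1) : (ρ + ρ⁻¹) / 2 - 1 ≤ ‖bernsteinPoint ρ θ - x‖ := by
  have ha := one_le_add_inv_div_two hρ
  have hb : ((ρ - ρ⁻¹) / 2) ^ 2 = ((ρ + ρ⁻¹) / 2) ^ 2 - 1 := by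
    have hmul : ρ * ρ⁻¹ = 1 := mul_inv_cancel₀ hρ.ne'
    linear_combination -hmul
  have hsq := sq_sub_one_le_ellipse_dist_sq ha hb (Real.sin_sq_add_cos_sq θ) hx
  rw [bernsteinPoint_eq, show ∀ u v : ℝ, (u : ℂ) + v * I - x = ((u - x : ℝ) : ℂ) + v * I by
    intro u v; push_cast; ring, norm_add_mul_I]
  exact Real.le_sqrt_of_sq_le (by linarith)

lemma norm_one_add_bernsteinPoint_pi {ρ : ℝ} (hρ : 0 < ρ) :
    ‖1 + bernsteinPoint ρ π‖ = (ρ + ρ⁻¹) / 2 - 1 := by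
  rw [bernsteinPoint_pi, show (1 : ℂ) + ((-((ρ + ρ⁻¹) / 2) : ℝ) : ℂ)
      = ((1 - (ρ + ρ⁻¹) / 2 : ℝ) : ℂ) by push_cast; ring,
    norm_real, Real.norm_eq_abs, abs_of_nonpos (by linarith [one_le_add_inv_div_two hρ])]
  ring

/-- The shortest distance from the Bernstein ellipse `E_ρ` (`ρ > 1`) to `[-1,1]`
equals `(ρ+ρ⁻¹)/2 - 1`, and in particular `min_{z ∈ E_ρ} |1+z| = (ρ+ρ⁻¹)/2 - 1`. -/
theorem bernstein_ellipse_dist_to_interval (ρ : ℝ) (hρ : 1 < ρ) :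
    IsLeast {r : ℝ | ∃ θ : ℝ, ∃ x ∈ Set.Icc (-1 : ℝ) 1,
        r = ‖(((ρ : ℂ) * Complex.exp (θ * Complex.I) +
          (ρ : ℂ)⁻¹ * Complex.exp (-(θ * Complex.I))) / 2 - (x : ℂ))‖}
      ((ρ + ρ⁻¹) / 2 - 1) ∧
    IsLeast {r : ℝ | ∃ θ : ℝ,
        r = ‖(1 + ((ρ : ℂ) * Complex.exp (θ * Complex.I) +
          (ρ : ℂ)⁻¹ * Complex.exp (-(θ * Complex.I))) / 2)‖}
      ((ρ + ρ⁻¹) / 2 - 1) := by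
  have hρ0 : 0 < ρ := by linarith
  have h_neg_one : (-1 : ℝ) ∈ Set.Icc (-1 : ℝ) 1 := by norm_num
  have h_one_add (θ : ℝ) : 1 + bernsteinPoint ρ θ = bernsteinPoint ρ θ - ((-1 : ℝ) : ℂ) := by
    push_cast; ring
  have h_attained := norm_one_add_bernsteinPoint_pi hρ0
  refine ⟨⟨⟨π, -1, h_neg_one, by rw [← h_attained, h_one_add]; rfl⟩, ?_⟩,
    ⟨⟨π, h_attained.symm⟩, ?_⟩⟩
  · rintro r ⟨θ, x, hx, rfl⟩
    exact add_inv_div_two_sub_one_le_norm_bernsteinPoint_sub hρ0 θ hx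
  · rintro r ⟨θ, rfl⟩
    show _ ≤ ‖1 + bernsteinPoint ρ θ‖
    rw [h_one_add]
    exact add_inv_div_two_sub_one_le_norm_bernsteinPoint_sub hρ0 θ h_neg_one
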